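/- Under the substitution w = (1 − sin 2z)/2, any solution φ(z) of the ODE φ'' − 2 tan(2z) φ' + 3φ = 0 on (−π/4, π/4), viewed as a function of w, satisfies the hypergeometric equation w(1−w) φ_{ww} + (1 − 2w) φ_w + (3/4) φ = 0. -/

import Mathlib

open Real Set

/-!
With `w = (1 - sin 2z)/2` one has `dw/dz = -cos 2z` and `d²w/dz² = 2 sin 2z`, so by the
chain rule `φ'' - 2 tan(2z) φ' + 3φ = cos² 2z · ψ'' + 4 sin 2z · ψ' + 3ψ`. Since
`cos² 2z = 4w(1-w)` and `sin 2z = 1 - 2w`, this is four times the hypergeometric expression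
at `w`, and every `w ∈ (0,1)` arises from some `z ∈ (-π/4, π/4)`.
-/

theorem deriv_eqOn_comp {φ ψ g g' : ℝ → ℝ} {s : Set ℝ} (hs : IsOpen s)
    (hφ : EqOn φ (ψ ∘ g) s) (hψ : ∀ x ∈ s, DifferentiableAt ℝ ψ (g x))
    (hg : ∀ x ∈ s, HasDerivAt g (g' x) x) :
    EqOn (deriv φ) (fun x => deriv ψ (g x) * g' x) s := by
  intro x hx
  rw [(hφ.eventuallyEq_of_mem (hs.mem_nhds hx)).deriv_eq]
  exact ((hψ x hx).hasDerivAt.comp x (hg x hx)).deriv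

theorem deriv_deriv_eqOn_comp {φ ψ g g' g'' : ℝ → ℝ} {s : Set ℝ} (hs : IsOpen s)
    (hφ : EqOn φ (ψ ∘ g) s) (hψ : ∀ x ∈ s, DifferentiableAt ℝ ψ (g x))
    (hψ' : ∀ x ∈ s, DifferentiableAt ℝ (deriv ψ) (g x))
    (hg : ∀ x ∈ s, HasDerivAt g (g' x) x) (hg' : ∀ x ∈ s, HasDerivAt g' (g'' x) x) :
    EqOn (deriv (deriv φ))
      (fun x => deriv (deriv ψ) (g x) * g' x ^ 2 + deriv ψ (g x) * g'' x) s := by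
  intro x hx
  rw [((deriv_eqOn_comp hs hφ hψ hg).eventuallyEq_of_mem (hs.mem_nhds hx)).deriv_eq]
  exact (((hψ' x hx).hasDerivAt.comp x (hg x hx)).mul (hg' x hx)).deriv.trans
    (by rw [Function.comp_apply]; ring)

theorem hasDerivAt_one_sub_sin_two_mul_div_two (z : ℝ) :
    HasDerivAt (fun z => (1 - sin (2 * z)) / 2) (-cos (2 * z)) z := by
  have h := (((hasDerivAt_id z).const_mul 2).sin.const_sub 1).div_const 2
  simp only [id, mul_one] at h
  exact h.congr_deriv (by ring)

theorem hasDerivAt_neg_cos_two_mul (z : ℝ) :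
    HasDerivAt (fun z => -cos (2 * z)) (2 * sin (2 * z)) z := by
  have h := ((hasDerivAt_id z).const_mul 2).cos.neg
  simp only [id, mul_one] at h
  exact h.congr_deriv (by ring)

theorem cos_two_mul_pos {z : ℝ} (hz : z ∈ Ioo (-(π / 4)) (π / 4)) : 0 < cos (2 * z) :=
  cos_pos_of_mem_Ioo ⟨by linarith [hz.1], by linarith [hz.2]⟩

theorem mapsTo_one_sub_sin_two_mul_div_two :
    MapsTo (fun z => (1 - sin (2 * z)) / 2) (Ioo (-(π / 4)) (π / 4)) (Ioo 0 1) := by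
  intro z hz
  have hsin : |sin (2 * z)| < 1 := by
    rw [← sq_lt_one_iff_abs_lt_one, sin_sq]
    linarith [pow_pos (cos_two_mul_pos hz) 2]
  constructor <;> linarith [abs_lt.mp hsin]

theorem surjOn_one_sub_sin_two_mul_div_two :
    SurjOn (fun z => (1 - sin (2 * z)) / 2) (Ioo (-(π / 4)) (π / 4)) (Ioo 0 1) := by
  intro w ⟨hw0, hw1⟩
  have h1 : -(π / 2) < arcsin (1 - 2 * w) := neg_pi_div_two_lt_arcsin.mpr (by linarith)
  have h2 : arcsin (1 - 2 * w) < π / 2 := arcsin_lt_pi_div_two.mpr (by linarith)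
  refine ⟨arcsin (1 - 2 * w) / 2, ⟨by linarith, by linarith⟩, ?_⟩
  show (1 - sin (2 * (arcsin (1 - 2 * w) / 2))) / 2 = w
  rw [mul_div_cancel₀ _ two_ne_zero, sin_arcsin (by linarith) (by linarith)]
  ring

/-- Under the substitution `w = (1 − sin 2z)/2`, any solution `φ` of
`φ'' − 2 tan(2z) φ' + 3φ = 0` on `(−π/4, π/4)`, viewed as a function `ψ` of `w`,
satisfies the hypergeometric equation `w(1−w)ψ'' + (1−2w)ψ' + (3/4)ψ = 0` on `(0,1)`. -/
theorem stmt3 (φ ψ : ℝ → ℝ)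
    (hsub : ∀ z ∈ Set.Ioo (-(π/4)) (π/4), φ z = ψ ((1 - Real.sin (2*z)) / 2))
    (hψ1 : ∀ w ∈ Set.Ioo (0:ℝ) 1, DifferentiableAt ℝ ψ w)
    (hψ2 : ∀ w ∈ Set.Ioo (0:ℝ) 1, DifferentiableAt ℝ (deriv ψ) w)
    (hODE : ∀ z ∈ Set.Ioo (-(π/4)) (π/4),
      deriv (deriv φ) z - 2 * Real.tan (2*z) * deriv φ z + 3 * φ z = 0) :
    ∀ w ∈ Set.Ioo (0:ℝ) 1,
      w * (1 - w) * deriv (deriv ψ) w + (1 - 2*w) * deriv ψ w + (3/4) * ψ w = 0 := by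
  intro _ hw
  obtain ⟨z, hz, rfl⟩ := surjOn_one_sub_sin_two_mul_div_two hw
  beta_reduce
  have hφ : EqOn φ (ψ ∘ fun z => (1 - sin (2 * z)) / 2) (Ioo (-(π / 4)) (π / 4)) := hsub
  have hψ x (hx : x ∈ Ioo (-(π / 4)) (π / 4)) := hψ1 _ (mapsTo_one_sub_sin_two_mul_div_two hx)
  have hψ' x (hx : x ∈ Ioo (-(π / 4)) (π / 4)) :=
    hψ2 _ (mapsTo_one_sub_sin_two_mul_div_two hx)
  have hg x (_ : x ∈ Ioo (-(π / 4)) (π / 4)) := hasDerivAt_one_sub_sin_two_mul_div_two x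
  have hg' x (_ : x ∈ Ioo (-(π / 4)) (π / 4)) := hasDerivAt_neg_cos_two_mul x
  have hode := hODE z hz
  rw [deriv_deriv_eqOn_comp isOpen_Ioo hφ hψ hψ' hg hg' hz,
    deriv_eqOn_comp isOpen_Ioo hφ hψ hg hz, hsub z hz] at hode
  have htan : tan (2 * z) * cos (2 * z) = sin (2 * z) := tan_mul_cos (cos_two_mul_pos hz).ne'
  set ψ₂ := deriv (deriv ψ) ((1 - sin (2 * z)) / 2)
  set ψ₁ := deriv ψ ((1 - sin (2 * z)) / 2)
  linear_combination hode / 4 - ψ₂ / 4 * sin_sq_add_cos_sq (2 * z) - ψ₁ / 2 * htan
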